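/- For every k ≥ 0 such that σ_k < 1, Broyden's 'good' scheme satisfies r_{k+1} ≤ ((M r_k/(2μ) + σ_k)/(1 − σ_k)) · r_k. -/

import Mathlib

/-!
Write `e = x_k - x*` and `e' = x_{k+1} - x*`. Since `B_k (x_{k+1} - x_k) = -F(x_k)`,
`e' = J*⁻¹(B_k - J*)(e - e') - J*⁻¹(F(x_k) - J* e)`.
The first term has norm at most `σ_k (r_k + r_{k+1})`. Along the segment from `x*` to `x_k` the
Jacobian differs from `J*` by at most `M t r_k`, so the linearisation error `F(x_k) - J* e` is at
most `M r_k² / 2`, and the second term is at most `r_k · M r_k / (2μ)`. Solving the resulting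
inequality for `r_{k+1}` gives the bound.
-/

open Matrix MeasureTheory

noncomputable def specNorm {n : ℕ} (A : Matrix (Fin n) (Fin n) ℝ) : ℝ :=
  ‖Matrix.toEuclideanCLM (𝕜 := ℝ) A‖

noncomputable def frobNorm {n : ℕ} (A : Matrix (Fin n) (Fin n) ℝ) : ℝ :=
  Real.sqrt (∑ i, ∑ j, (A i j) ^ 2)

noncomputable def vnorm {n : ℕ} (x : Fin n → ℝ) : ℝ :=
  Real.sqrt (∑ i, (x i) ^ 2)

noncomputable def intJac {n : ℕ} (J : (Fin n → ℝ) → Matrix (Fin n) (Fin n) ℝ)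
    (x u : Fin n → ℝ) : Matrix (Fin n) (Fin n) ℝ :=
  Matrix.of fun i j => ∫ t in (0:ℝ)..(1:ℝ), J (x + t • u) i j

section LipschitzDerivative

variable {E G : Type*} [NormedAddCommGroup E] [NormedSpace ℝ E]
  [NormedAddCommGroup G] [NormedSpace ℝ G]

theorem norm_sub_sub_fderiv_le_of_lipschitzAt {f : E → G} {f' : E → E →L[ℝ] G}
    (hf : ∀ z, HasFDerivAt f (f' z) z) {a : E} {M : ℝ}
    (hLip : ∀ z, ‖f' z - f' a‖ ≤ M * ‖z - a‖) (e : E) :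
    ‖f (a + e) - f a - f' a e‖ ≤ M * ‖e‖ ^ 2 / 2 := by
  set φ : ℝ → G := fun t => f (a + t • e) - f a - t • f' a e
  have hφ : ∀ t, HasDerivAt φ ((f' (a + t • e) - f' a) e) t := fun t => by
    have hline : HasDerivAt (fun t : ℝ => a + t • e) e t := by
      simpa using ((hasDerivAt_id t).smul_const e).const_add a
    exact ((((hf _).comp_hasDerivAt t hline).sub_const (f a)).sub
      ((hasDerivAt_id t).smul_const (f' a e))).congr_deriv (by simp)
  have hbound : ∀ t ∈ Set.Ico (0 : ℝ) 1, ‖(f' (a + t • e) - f' a) e‖ ≤ M * ‖e‖ ^ 2 * t :=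
    fun t ht => calc
      ‖(f' (a + t • e) - f' a) e‖ ≤ ‖f' (a + t • e) - f' a‖ * ‖e‖ :=
        (f' (a + t • e) - f' a).le_opNorm e
      _ ≤ M * ‖t • e‖ * ‖e‖ := by
        gcongr
        simpa using hLip (a + t • e)
      _ = M * ‖e‖ ^ 2 * t := by
        rw [norm_smul, Real.norm_of_nonneg ht.1]; ring
  have hB : ∀ t, HasDerivAt (fun t : ℝ => M * ‖e‖ ^ 2 * t ^ 2 / 2) (M * ‖e‖ ^ 2 * t) t :=
    fun t => (((hasDerivAt_pow 2 t).const_mul (M * ‖e‖ ^ 2)).div_const 2).congr_deriv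
      (by push_cast; ring)
  have hφ_one := image_norm_le_of_norm_deriv_right_le_deriv_boundary
    (fun t _ => (hφ t).continuousAt.continuousWithinAt) (fun t _ => (hφ t).hasDerivWithinAt)
    (by simp [φ]) hB hbound (Set.right_mem_Icc.2 zero_le_one)
  simpa [φ] using hφ_one

end LipschitzDerivative

section EuclideanNorms

variable {n : ℕ}

theorem vnorm_eq_norm_toLp (v : Fin n → ℝ) : vnorm v = ‖WithLp.toLp 2 v‖ := by
  simp [vnorm, EuclideanSpace.norm_eq]

theorem vnorm_sub_le (u v : Fin n → ℝ) : vnorm (u - v) ≤ vnorm u + vnorm v := by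
  simpa only [vnorm_eq_norm_toLp, WithLp.toLp_sub] using norm_sub_le _ _

theorem vnorm_mulVec_le_specNorm_mul (A : Matrix (Fin n) (Fin n) ℝ) (v : Fin n → ℝ) :
    vnorm (A *ᵥ v) ≤ specNorm A * vnorm v := by
  simpa only [specNorm, vnorm_eq_norm_toLp, ← toEuclideanCLM_toLp] using
    (toEuclideanCLM (𝕜 := ℝ) A).le_opNorm (WithLp.toLp 2 v)

theorem vnorm_mulVec_le_frobNorm_mul (A : Matrix (Fin n) (Fin n) ℝ) (v : Fin n → ℝ) :
    vnorm (A *ᵥ v) ≤ frobNorm A * vnorm v := by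
  rw [vnorm, vnorm, frobNorm, ← Real.sqrt_mul (by positivity), Finset.sum_mul]
  gcongr with i
  exact Finset.sum_mul_sq_le_sq_mul_sq Finset.univ (A i) v

theorem vnorm_sub_sub_mulVec_le {F : (Fin n → ℝ) → (Fin n → ℝ)}
    {J : (Fin n → ℝ) → Matrix (Fin n) (Fin n) ℝ}
    (hF : ∀ z, HasFDerivAt F (LinearMap.toContinuousLinearMap ((J z).mulVecLin)) z)
    {a : Fin n → ℝ} {M : ℝ} (hLip : ∀ z, specNorm (J z - J a) ≤ M * vnorm (z - a))
    (e : Fin n → ℝ) :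
    vnorm (F (a + e) - F a - J a *ᵥ e) ≤ M * vnorm e ^ 2 / 2 := by
  let L := PiLp.continuousLinearEquiv 2 ℝ (fun _ : Fin n => ℝ)
  have hFe : ∀ w : EuclideanSpace ℝ (Fin n), HasFDerivAt (fun w => L.symm (F (L w)))
      (toEuclideanCLM (𝕜 := ℝ) (J (L w))) w := fun w =>
    (L.symm.hasFDerivAt.comp _ ((hF (L w)).comp w L.hasFDerivAt)).congr_fderiv rfl
  have hbound := norm_sub_sub_fderiv_le_of_lipschitzAt hFe (a := L.symm a) (M := M)
    (fun z => by
      simpa [specNorm, vnorm_eq_norm_toLp, L, PiLp.coe_continuousLinearEquiv] using hLip (L z))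
    (L.symm e)
  simpa [vnorm_eq_norm_toLp, L, PiLp.coe_continuousLinearEquiv] using hbound

end EuclideanNorms

theorem sub_eq_of_quasiNewton_step {ι R : Type*} [Fintype ι] [DecidableEq ι] [CommRing R]
    {A B : Matrix ι ι R} (hA : IsUnit A.det) (hB : IsUnit B.det) {x x' xs v : ι → R}
    (hx' : x' = x - B⁻¹ *ᵥ v) :
    x' - xs = (A⁻¹ * (B - A)) *ᵥ ((x - xs) - (x' - xs)) - A⁻¹ *ᵥ (v - A *ᵥ (x - xs)) := by
  have hstep : B *ᵥ ((x - xs) - (x' - xs)) = v := by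
    rw [hx', sub_sub_sub_cancel_right, sub_sub_cancel, mulVec_mulVec, mul_nonsing_inv _ hB,
      one_mulVec]
  rw [← mulVec_mulVec, sub_mulVec, hstep, ← mulVec_sub, sub_sub_sub_cancel_left, ← mulVec_sub,
    sub_sub_cancel, mulVec_mulVec, nonsing_inv_mul _ hA, one_mulVec]

theorem le_div_one_sub_mul_of_le_mul_add {r r' c σ : ℝ} (hσ : σ < 1)
    (h : r' ≤ c * r + σ * (r + r')) : r' ≤ (c + σ) / (1 - σ) * r := by
  rw [div_mul_eq_mul_div, le_div_iff₀ (by linarith)]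
  linarith

theorem stmt5_general {n : ℕ} (F : (Fin n → ℝ) → (Fin n → ℝ))
    (J : (Fin n → ℝ) → Matrix (Fin n) (Fin n) ℝ)
    (hF : ∀ z, HasFDerivAt F (LinearMap.toContinuousLinearMap ((J z).mulVecLin)) z)
    (xs : Fin n → ℝ) (hxs : F xs = 0) (hJs : IsUnit (J xs).det)
    (μ : ℝ) (hμ : μ = 1 / specNorm ((J xs)⁻¹))
    (M : ℝ)
    (hLip : ∀ z, specNorm (J z - J xs) ≤ M * vnorm (z - xs))
    (x : ℕ → Fin n → ℝ) (B : ℕ → Matrix (Fin n) (Fin n) ℝ)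
    (hBk : ∀ k, IsUnit (B k).det)
    (hx : ∀ k, x (k + 1) = x k - (B k)⁻¹ *ᵥ F (x k)) :
    ∀ k : ℕ, frobNorm ((J xs)⁻¹ * (B k - J xs)) < 1 →
      vnorm (x (k + 1) - xs) ≤
        (M * vnorm (x k - xs) / (2 * μ) + frobNorm ((J xs)⁻¹ * (B k - J xs)))
          / (1 - frobNorm ((J xs)⁻¹ * (B k - J xs))) * vnorm (x k - xs) := by
  intro k hσ
  set e := x k - xs
  set e' := x (k + 1) - xs
  set σ := frobNorm ((J xs)⁻¹ * (B k - J xs))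
  have hlin : vnorm (F (x k) - J xs *ᵥ e) ≤ M * vnorm e ^ 2 / 2 := by
    simpa [hxs, e] using vnorm_sub_sub_mulVec_le hF hLip e
  have herr : e' = ((J xs)⁻¹ * (B k - J xs)) *ᵥ (e - e') - (J xs)⁻¹ *ᵥ (F (x k) - J xs *ᵥ e) :=
    sub_eq_of_quasiNewton_step hJs (hBk k) (hx k)
  -- no case split on `specNorm (J xs)⁻¹ = 0`: then `μ = 0` and both sides vanish
  have hμe : M * vnorm e / (2 * μ) * vnorm e = specNorm (J xs)⁻¹ * (M * vnorm e ^ 2 / 2) := by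
    rw [hμ, one_div, div_eq_mul_inv, mul_inv, inv_inv]
    ring
  refine le_div_one_sub_mul_of_le_mul_add hσ ?_
  calc vnorm e'
      ≤ vnorm (((J xs)⁻¹ * (B k - J xs)) *ᵥ (e - e')) +
          vnorm ((J xs)⁻¹ *ᵥ (F (x k) - J xs *ᵥ e)) :=
        (congrArg vnorm herr).trans_le (vnorm_sub_le _ _)
    _ ≤ σ * (vnorm e + vnorm e') + specNorm (J xs)⁻¹ * (M * vnorm e ^ 2 / 2) := by
        gcongr
        · exact (vnorm_mulVec_le_frobNorm_mul _ _).trans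
            (mul_le_mul_of_nonneg_left (vnorm_sub_le _ _) (Real.sqrt_nonneg _))
        · exact (vnorm_mulVec_le_specNorm_mul _ _).trans
            (mul_le_mul_of_nonneg_left hlin (norm_nonneg _))
    _ = M * vnorm e / (2 * μ) * vnorm e + σ * (vnorm e + vnorm e') := by
        rw [hμe, add_comm]

/-- For Broyden's "good" scheme, whenever `σ_k < 1` one has
`r_{k+1} ≤ ((M r_k/(2μ) + σ_k)/(1 − σ_k)) · r_k`. -/
theorem stmt5 {n : ℕ} (F : (Fin n → ℝ) → (Fin n → ℝ))
    (J : (Fin n → ℝ) → Matrix (Fin n) (Fin n) ℝ)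
    (hF : ∀ z, HasFDerivAt F (LinearMap.toContinuousLinearMap ((J z).mulVecLin)) z)
    (hJc : Continuous J)
    (xs : Fin n → ℝ) (hxs : F xs = 0) (hJs : IsUnit (J xs).det)
    (μ : ℝ) (hμ : μ = 1 / specNorm ((J xs)⁻¹))
    (M : ℝ) (hM : 0 ≤ M)
    (hLip : ∀ z, specNorm (J z - J xs) ≤ M * vnorm (z - xs))
    (x : ℕ → Fin n → ℝ) (B : ℕ → Matrix (Fin n) (Fin n) ℝ)
    (hBk : ∀ k, IsUnit (B k).det) (hFk : ∀ k, F (x k) ≠ 0)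
    (hx : ∀ k, x (k + 1) = x k - (B k)⁻¹ *ᵥ F (x k))
    (hB : ∀ k, B (k + 1) = B k + ((x (k + 1) - x k) ⬝ᵥ (x (k + 1) - x k))⁻¹ •
        vecMulVec (F (x (k + 1)) - F (x k) - B k *ᵥ (x (k + 1) - x k)) (x (k + 1) - x k)) :
    ∀ k : ℕ, frobNorm ((J xs)⁻¹ * (B k - J xs)) < 1 →
      vnorm (x (k + 1) - xs) ≤
        (M * vnorm (x k - xs) / (2 * μ) + frobNorm ((J xs)⁻¹ * (B k - J xs)))
          / (1 - frobNorm ((J xs)⁻¹ * (B k - J xs))) * vnorm (x k - xs) :=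
  stmt5_general F J hF xs hxs hJs μ hμ M hLip x B hBk hx
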